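/- For any smooth periodic function f on the two-dimensional torus 𝕋², the L⁴ norm of the gradient satisfies ‖∇f‖_{L⁴}² ≤ 3 ‖f‖_{L^∞} ‖Δf‖_{L²}. -/

import Mathlib

open MeasureTheory

/-- Partial derivative in direction `i` of a function on `ℝ²`. -/
noncomputable def pd (i : Fin 2) (f : (Fin 2 → ℝ) → ℝ) : (Fin 2 → ℝ) → ℝ :=
  fun x => fderiv ℝ f x (Pi.single i 1)

/-- The fundamental cell `[0,1]²` of the torus `𝕋²`. -/
def T2 : Set (Fin 2 → ℝ) := Set.univ.pi fun _ => Set.Icc (0:ℝ) 1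

/-- `f` is `1`-periodic in each coordinate direction (i.e. lives on the torus `𝕋²`). -/
def Per (f : (Fin 2 → ℝ) → ℝ) : Prop :=
  ∀ (x : Fin 2 → ℝ) (i : Fin 2), f (x + Pi.single i 1) = f x

namespace GradHelper

lemma T2_eq : T2 = Set.Icc (0 : Fin 2 → ℝ) 1 := by
  rw [← Set.pi_univ_Icc]
  rfl

lemma isCompact_T2 : IsCompact T2 := by rw [T2_eq]; exact isCompact_Icc

lemma measurableSet_T2 : MeasurableSet T2 := by rw [T2_eq]; exact measurableSet_Icc

lemma intT2 {g : (Fin 2 → ℝ) → ℝ} (hg : Continuous g) : IntegrableOn g T2 :=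
  hg.continuousOn.integrableOn_compact isCompact_T2

lemma pd_contDiff {g : (Fin 2 → ℝ) → ℝ} (hg : ContDiff ℝ (⊤ : ℕ∞) g) (i : Fin 2) :
    ContDiff ℝ (⊤ : ℕ∞) (pd i g) :=
  (hg.fderiv_right (by simp)).clm_apply contDiff_const

lemma pd_cont {g : (Fin 2 → ℝ) → ℝ} (hg : ContDiff ℝ (⊤ : ℕ∞) g) (i : Fin 2) :
    Continuous (pd i g) :=
  (pd_contDiff hg i).continuous

lemma fderiv_shift {g : (Fin 2 → ℝ) → ℝ} (hg : Differentiable ℝ g) (c x : Fin 2 → ℝ) :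
    fderiv ℝ (fun y => g (y + c)) x = fderiv ℝ g (x + c) := by
  have h : HasFDerivAt (fun y => g (y + c)) (fderiv ℝ g (x + c)) x := by
    have := (hg (x + c)).hasFDerivAt.comp x ((hasFDerivAt_id x).add_const c)
    exact this
  exact h.fderiv

lemma per_pd {g : (Fin 2 → ℝ) → ℝ} (hg : ContDiff ℝ (⊤ : ℕ∞) g) (hper : Per g) (i : Fin 2) :
    Per (pd i g) := by
  intro x j
  unfold pd
  rw [← fderiv_shift (hg.differentiable (by simp)) (Pi.single j 1) x]
  have h : (fun y => g (y + Pi.single j 1)) = g := funext fun y => hper y j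
  rw [h]

lemma pd_mul {u v : (Fin 2 → ℝ) → ℝ} (hu : ContDiff ℝ (⊤ : ℕ∞) u) (hv : ContDiff ℝ (⊤ : ℕ∞) v)
    (i : Fin 2) (x : Fin 2 → ℝ) :
    pd i (fun y => u y * v y) x = pd i u x * v x + u x * pd i v x := by
  unfold pd
  rw [fderiv_fun_mul (hu.differentiable (by simp) x) (hv.differentiable (by simp) x)]
  simp only [ContinuousLinearMap.add_apply, ContinuousLinearMap.smul_apply, smul_eq_mul]
  ring

lemma pd_pd {g : (Fin 2 → ℝ) → ℝ} (hg : ContDiff ℝ (⊤ : ℕ∞) g) (i j : Fin 2) (x : Fin 2 → ℝ) :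
    pd i (pd j g) x = fderiv ℝ (fderiv ℝ g) x (Pi.single i 1) (Pi.single j 1) := by
  have hdg : Differentiable ℝ (fderiv ℝ g) := (hg.fderiv_right (m := 1) (WithTop.coe_le_coe.mpr le_top)).differentiable one_ne_zero
  have h0 := (ContinuousLinearMap.apply ℝ ℝ ((Pi.single j 1 : Fin 2 → ℝ))).hasFDerivAt.comp
      x (hdg x).hasFDerivAt
  have h : HasFDerivAt (pd j g)
      ((ContinuousLinearMap.apply ℝ ℝ ((Pi.single j 1 : Fin 2 → ℝ))).comp
        (fderiv ℝ (fderiv ℝ g) x)) x := by exact h0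
  show fderiv ℝ (pd j g) x (Pi.single i 1) = _
  rw [h.fderiv]
  simp

lemma pd_comm {g : (Fin 2 → ℝ) → ℝ} (hg : ContDiff ℝ (⊤ : ℕ∞) g) (i j : Fin 2) :
    pd i (pd j g) = pd j (pd i g) := by
  funext x
  rw [pd_pd hg i j x, pd_pd hg j i x]
  have hdg : Differentiable ℝ (fderiv ℝ g) := (hg.fderiv_right (m := 1) (WithTop.coe_le_coe.mpr le_top)).differentiable one_ne_zero
  exact second_derivative_symmetric (fun y => (hg.differentiable (by simp) y).hasFDerivAt)
    (hdg x).hasFDerivAt _ _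

/-- Integral of a partial derivative of a periodic function over the cell vanishes. -/
lemma int_pd_zero {g : (Fin 2 → ℝ) → ℝ} (hg : ContDiff ℝ (⊤ : ℕ∞) g) (hper : Per g) (i : Fin 2) :
    ∫ x in T2, pd i g x = 0 := by
  classical
  have hd : Differentiable ℝ g := hg.differentiable (by simp)
  set F : Fin 2 → (Fin 2 → ℝ) → ℝ := fun j => if j = i then g else 0 with hF
  set F' : Fin 2 → (Fin 2 → ℝ) → (Fin 2 → ℝ) →L[ℝ] ℝ :=
    fun j x => if j = i then fderiv ℝ g x else 0 with hF'
  have hsum : ∀ x : Fin 2 → ℝ, (∑ j, F' j x (Pi.single j 1)) = pd i g x := by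
    intro x
    have : ∀ j : Fin 2, F' j x (Pi.single j 1)
        = if j = i then fderiv ℝ g x (Pi.single j 1) else 0 := by
      intro j
      by_cases h : j = i <;> simp [hF', h]
    rw [Finset.sum_congr rfl fun j _ => this j]
    simp [pd]
  have Hc : ∀ j, ContinuousOn (F j) (Set.Icc (0 : Fin 2 → ℝ) 1) := by
    intro j
    by_cases h : j = i
    · simpa [hF, h] using hg.continuous.continuousOn
    · simp only [hF, h, if_false]; exact continuousOn_const
  have Hd : ∀ x ∈ (Set.pi Set.univ fun k => Set.Ioo ((0 : Fin 2 → ℝ) k) ((1 : Fin 2 → ℝ) k))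
      \ (∅ : Set (Fin 2 → ℝ)), ∀ j, HasFDerivAt (F j) (F' j x) x := by
    intro x _ j
    by_cases h : j = i
    · simpa [hF, hF', h] using (hd x).hasFDerivAt
    · simp only [hF, hF', h, if_false]; exact hasFDerivAt_const (0 : ℝ) x
  have Hi : IntegrableOn (fun x => ∑ j, F' j x (Pi.single j 1)) (Set.Icc (0 : Fin 2 → ℝ) 1) := by
    rw [show (fun x => ∑ j, F' j x (Pi.single j 1)) = pd i g from funext hsum]
    exact T2_eq ▸ intT2 (pd_cont hg i)
  have key := integral_divergence_of_hasFDerivAt_off_countable' (n := 1)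
      (0 : Fin 2 → ℝ) 1 (fun _ => zero_le_one) F F' ∅ Set.countable_empty Hc Hd Hi
  have hins : ∀ (x : Fin 1 → ℝ), (Fin.insertNth i (1 : ℝ) x : Fin 2 → ℝ)
      = (Fin.insertNth i (0 : ℝ) x : Fin 2 → ℝ) + Pi.single i 1 := by
    intro x
    funext k
    refine Fin.succAboveCases i ?_ ?_ k
    · simp
    · intro m
      simp [Fin.insertNth_apply_succAbove, Pi.single_eq_of_ne (Fin.succAbove_ne i m)]
  rw [T2_eq]
  rw [show (∫ x in Set.Icc (0 : Fin 2 → ℝ) 1, pd i g x)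
      = ∫ x in Set.Icc (0 : Fin 2 → ℝ) 1, ∑ j, F' j x (Pi.single j 1) from
    setIntegral_congr_fun measurableSet_Icc fun x _ => (hsum x).symm]
  rw [key]
  refine Finset.sum_eq_zero fun j _ => ?_
  by_cases h : j = i
  · subst h
    rw [sub_eq_zero]
    refine setIntegral_congr_fun measurableSet_Icc fun x _ => ?_
    by_cases hji : True
    · show F j (j.insertNth ((1 : Fin 2 → ℝ) j) x) = F j (j.insertNth ((0 : Fin 2 → ℝ) j) x)
      simp only [hF, if_pos rfl, Pi.one_apply, Pi.zero_apply]
      rw [hins x, hper]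
    · exact absurd trivial hji
  · simp [hF, h]


/-- Integration by parts on the torus. -/
lemma ibp {u v : (Fin 2 → ℝ) → ℝ} (hu : ContDiff ℝ (⊤ : ℕ∞) u) (hv : ContDiff ℝ (⊤ : ℕ∞) v)
    (hpu : Per u) (hpv : Per v) (i : Fin 2) :
    ∫ x in T2, pd i u x * v x = - ∫ x in T2, u x * pd i v x := by
  have hper : Per (fun y => u y * v y) := by
    intro x j
    show u _ * v _ = u x * v x
    rw [hpu x j, hpv x j]
  have h0 := int_pd_zero (hu.mul hv) hper i
  have h1 : ∫ x in T2, pd i (fun y => u y * v y) x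
      = ∫ x in T2, (pd i u x * v x + u x * pd i v x) :=
    setIntegral_congr_fun measurableSet_T2 fun x _ => pd_mul hu hv i x
  rw [h1, integral_add (f := fun x => pd i u x * v x) (g := fun x => u x * pd i v x) (intT2 ((pd_cont hu i).mul hv.continuous))
    (intT2 (hu.continuous.mul (pd_cont hv i)))] at h0
  linarith

/-- Cauchy–Schwarz on the torus cell. -/
lemma cs {u v : (Fin 2 → ℝ) → ℝ} (hu : Continuous u) (hv : Continuous v) :
    ∫ x in T2, u x * v x
      ≤ Real.sqrt (∫ x in T2, (u x)^2) * Real.sqrt (∫ x in T2, (v x)^2) := by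
  have hfin : IsFiniteMeasure (volume.restrict T2) :=
    ⟨by rw [Measure.restrict_apply_univ]; exact isCompact_T2.measure_lt_top⟩
  obtain ⟨Cu, hCu⟩ := isCompact_T2.exists_bound_of_continuousOn hu.continuousOn
  obtain ⟨Cv, hCv⟩ := isCompact_T2.exists_bound_of_continuousOn hv.continuousOn
  have hmu : MemLp (fun x => |u x|) (ENNReal.ofReal 2) (volume.restrict T2) := by
    refine MemLp.of_bound hu.abs.aestronglyMeasurable Cu ?_
    filter_upwards [ae_restrict_mem measurableSet_T2] with x hx
    simpa [Real.norm_eq_abs, abs_abs] using hCu x hx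
  have hmv : MemLp (fun x => |v x|) (ENNReal.ofReal 2) (volume.restrict T2) := by
    refine MemLp.of_bound hv.abs.aestronglyMeasurable Cv ?_
    filter_upwards [ae_restrict_mem measurableSet_T2] with x hx
    simpa [Real.norm_eq_abs, abs_abs] using hCv x hx
  have hpq : (2:ℝ).HolderConjugate 2 := Real.HolderConjugate.two_two
  have key := integral_mul_le_Lp_mul_Lq_of_nonneg (μ := volume.restrict T2) hpq
    (Filter.Eventually.of_forall fun x => abs_nonneg (u x))
    (Filter.Eventually.of_forall fun x => abs_nonneg (v x)) hmu hmv
  have e1 : ∫ x in T2, |u x| ^ (2:ℝ) = ∫ x in T2, (u x)^2 :=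
    integral_congr_ae (Filter.Eventually.of_forall fun x => by simp [Real.rpow_two, sq_abs])
  have e2 : ∫ x in T2, |v x| ^ (2:ℝ) = ∫ x in T2, (v x)^2 :=
    integral_congr_ae (Filter.Eventually.of_forall fun x => by simp [Real.rpow_two, sq_abs])
  calc ∫ x in T2, u x * v x ≤ ∫ x in T2, |u x| * |v x| :=
        integral_mono (intT2 (hu.mul hv)) (intT2 (hu.abs.mul hv.abs))
          (fun x => by rw [← abs_mul]; exact le_abs_self _)
    _ ≤ (∫ x in T2, (u x)^2) ^ (1/(2:ℝ)) * (∫ x in T2, (v x)^2) ^ (1/(2:ℝ)) := by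
        rw [← e1, ← e2]; exact key
    _ = _ := by rw [Real.sqrt_eq_rpow, Real.sqrt_eq_rpow]


/-- Key coordinate-wise estimate: `∫ (∂ᵢf)⁴ ≤ 9 M² ∫ (∂ᵢᵢf)²`. -/
lemma key_est (f : (Fin 2 → ℝ) → ℝ) (hf : ContDiff ℝ (⊤ : ℕ∞) f) (hp : Per f) (M : ℝ)
    (hM : ∀ x, |f x| ≤ M) (i : Fin 2) :
    (∫ x in T2, (pd i f x)^4) ≤ 9 * M^2 * ∫ x in T2, (pd i (pd i f) x)^2 := by
  have hM0 : 0 ≤ M := le_trans (abs_nonneg _) (hM 0)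
  have hu_cd : ContDiff ℝ (⊤ : ℕ∞) (pd i f) := pd_contDiff hf i
  have hu_per : Per (pd i f) := per_pd hf hp i
  have hw_cd : ContDiff ℝ (⊤ : ℕ∞) (pd i (pd i f)) := pd_contDiff hu_cd i
  set A := ∫ x in T2, (pd i f x)^4 with hA
  set B := ∫ x in T2, (pd i (pd i f) x)^2 with hB
  set I := ∫ x in T2, f x * ((pd i f x)^2 * pd i (pd i f) x) with hI
  set J := ∫ x in T2, (pd i f x)^2 * |pd i (pd i f) x| with hJ
  have hA0 : 0 ≤ A := setIntegral_nonneg measurableSet_T2 fun x _ => by positivity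
  have hB0 : 0 ≤ B := setIntegral_nonneg measurableSet_T2 fun x _ => sq_nonneg _
  -- integration by parts
  have hv_cd : ContDiff ℝ (⊤ : ℕ∞) (fun y => pd i f y * pd i f y * pd i f y) :=
    (hu_cd.mul hu_cd).mul hu_cd
  have hv_per : Per (fun y => pd i f y * pd i f y * pd i f y) := by
    intro x j
    show pd i f _ * pd i f _ * pd i f _ = _
    rw [hu_per x j]
  have hibp := ibp hf hv_cd hp hv_per i
  have hL : ∫ x in T2, pd i f x * (pd i f x * pd i f x * pd i f x) = A :=
    setIntegral_congr_fun measurableSet_T2 fun x _ => by ring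
  have hptv : ∀ x, pd i (fun y => pd i f y * pd i f y * pd i f y) x
      = 3 * ((pd i f x)^2 * pd i (pd i f) x) := by
    intro x
    rw [pd_mul (hu_cd.mul hu_cd) hu_cd, pd_mul hu_cd hu_cd]
    ring
  have hR : ∫ x in T2, f x * pd i (fun y => pd i f y * pd i f y * pd i f y) x = 3 * I := by
    rw [hI, ← integral_const_mul]
    exact setIntegral_congr_fun measurableSet_T2 fun x _ => by rw [hptv x]; ring
  have hAeq : A = -(3 * I) := by rw [← hL, hibp, hR]
  -- bound |I|
  have habs : |I| ≤ M * J := by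
    have int1 : IntegrableOn
        (fun x => |f x * ((pd i f x)^2 * pd i (pd i f) x)|) T2 :=
      intT2 (hf.continuous.mul (((pd_cont hf i).pow 2).mul (pd_cont hu_cd i))).abs
    have int2 : IntegrableOn
        (fun x => M * ((pd i f x)^2 * |pd i (pd i f) x|)) T2 :=
      intT2 (continuous_const.mul (((pd_cont hf i).pow 2).mul (pd_cont hu_cd i).abs))
    calc |I| ≤ ∫ x in T2, |f x * ((pd i f x)^2 * pd i (pd i f) x)| := by
          simpa only [Real.norm_eq_abs] using
            norm_integral_le_integral_norm (μ := volume.restrict T2)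
              (fun x => f x * ((pd i f x)^2 * pd i (pd i f) x))
      _ ≤ ∫ x in T2, M * ((pd i f x)^2 * |pd i (pd i f) x|) := by
          refine integral_mono int1 int2 fun x => ?_
          have h1 : |f x * ((pd i f x)^2 * pd i (pd i f) x)|
              = |f x| * ((pd i f x)^2 * |pd i (pd i f) x|) := by
            rw [abs_mul, abs_mul, abs_pow, sq_abs]
          rw [h1]
          exact mul_le_mul_of_nonneg_right (hM x) (by positivity)
      _ = M * J := by rw [hJ, integral_const_mul]
  -- Cauchy–Schwarz
  have hcs := cs (u := fun x => (pd i f x)^2) (v := fun x => |pd i (pd i f) x|)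
    ((pd_cont hf i).pow 2) (pd_cont hu_cd i).abs
  have hc1 : ∫ x in T2, ((pd i f x)^2)^2 = A :=
    setIntegral_congr_fun measurableSet_T2 fun x _ => by ring
  have hc2 : ∫ x in T2, (|pd i (pd i f) x|)^2 = B :=
    setIntegral_congr_fun measurableSet_T2 fun x _ => sq_abs _
  rw [hc1, hc2] at hcs
  -- hcs : J ≤ sqrt A * sqrt B  (after defeq of integrand)
  have hJcs : J ≤ Real.sqrt A * Real.sqrt B := hcs
  have h2 : A ≤ 3 * (M * (Real.sqrt A * Real.sqrt B)) := by
    have h3 : A ≤ 3 * |I| := by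
      rw [hAeq]
      have := neg_abs_le I
      nlinarith [abs_nonneg I]
    have h4 : M * J ≤ M * (Real.sqrt A * Real.sqrt B) :=
      mul_le_mul_of_nonneg_left hJcs hM0
    nlinarith
  nlinarith [Real.mul_self_sqrt hA0, Real.mul_self_sqrt hB0,
    sq_nonneg (Real.sqrt A - 3 * M * Real.sqrt B), Real.sqrt_nonneg A,
    Real.sqrt_nonneg B, hM0]


/-- The cross term `∫ ∂₀₀f ∂₁₁f` is nonnegative (it equals `∫ (∂₀₁f)²`). -/
lemma cross_nonneg (f : (Fin 2 → ℝ) → ℝ) (hf : ContDiff ℝ (⊤ : ℕ∞) f) (hp : Per f) :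
    0 ≤ ∫ x in T2, pd 0 (pd 0 f) x * pd 1 (pd 1 f) x := by
  have hu_cd : ∀ i, ContDiff ℝ (⊤ : ℕ∞) (pd i f) := fun i => pd_contDiff hf i
  have hu_per : ∀ i, Per (pd i f) := fun i => per_pd hf hp i
  have hw_cd : ∀ i j, ContDiff ℝ (⊤ : ℕ∞) (pd j (pd i f)) := fun i j => pd_contDiff (hu_cd i) j
  have hw_per : ∀ i j, Per (pd j (pd i f)) := fun i j => per_pd (hu_cd i) (hu_per i) j
  have e1 := ibp (hu_cd 0) (hw_cd 1 1) (hu_per 0) (hw_per 1 1) 0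
  have e2 := ibp (hu_cd 0) (hw_cd 1 0) (hu_per 0) (hw_per 1 0) 1
  have hs1 : pd 0 (pd 1 (pd 1 f)) = pd 1 (pd 0 (pd 1 f)) := pd_comm (hu_cd 1) 0 1
  have hs2 : pd 0 (pd 1 f) = pd 1 (pd 0 f) := pd_comm hf 0 1
  have heq : ∫ x in T2, pd 0 (pd 0 f) x * pd 1 (pd 1 f) x
      = ∫ x in T2, pd 1 (pd 0 f) x * pd 1 (pd 0 f) x := by
    rw [e1, hs1, ← e2, hs2]
  rw [heq]
  exact setIntegral_nonneg measurableSet_T2 fun x _ => mul_self_nonneg _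

end GradHelper

open GradHelper in
/-- For any smooth periodic `f` on `𝕋²`: `‖∇f‖_{L⁴}² ≤ 3 ‖f‖_{L^∞} ‖Δf‖_{L²}`,
where `‖∇f‖_{L⁴}⁴ = ∫ (|∂₁f|⁴ + |∂₂f|⁴)` and `M` is any `L^∞` bound for `f`. -/
theorem grad_L4_sq_le (f : (Fin 2 → ℝ) → ℝ)
    (hf : ContDiff ℝ (⊤ : ℕ∞) f) (hp : Per f) (M : ℝ) (hM : ∀ x, |f x| ≤ M) :
    Real.sqrt (∫ x in T2, (pd 0 f x)^4 + (pd 1 f x)^4)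
      ≤ 3 * M * Real.sqrt (∫ x in T2, (pd 0 (pd 0 f) x + pd 1 (pd 1 f) x)^2) := by
  have hM0 : 0 ≤ M := le_trans (abs_nonneg _) (hM 0)
  have hu_cd : ∀ i, ContDiff ℝ (⊤ : ℕ∞) (pd i f) := fun i => pd_contDiff hf i
  have hw_cd : ∀ i j, ContDiff ℝ (⊤ : ℕ∞) (pd j (pd i f)) := fun i j => pd_contDiff (hu_cd i) j
  -- expand the Laplacian square
  have hexp : ∫ x in T2, (pd 0 (pd 0 f) x + pd 1 (pd 1 f) x)^2
      = (∫ x in T2, (pd 0 (pd 0 f) x)^2)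
        + ((∫ x in T2, 2 * (pd 0 (pd 0 f) x * pd 1 (pd 1 f) x))
          + ∫ x in T2, (pd 1 (pd 1 f) x)^2) := by
    rw [setIntegral_congr_fun measurableSet_T2
      (show Set.EqOn (fun x => (pd 0 (pd 0 f) x + pd 1 (pd 1 f) x)^2)
        (fun x => (pd 0 (pd 0 f) x)^2
          + (2 * (pd 0 (pd 0 f) x * pd 1 (pd 1 f) x) + (pd 1 (pd 1 f) x)^2)) T2
        from fun x _ => by simp only; ring)]
    rw [integral_add (f := fun x => (pd 0 (pd 0 f) x)^2)
      (g := fun x => 2 * (pd 0 (pd 0 f) x * pd 1 (pd 1 f) x) + (pd 1 (pd 1 f) x)^2)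
      (intT2 ((pd_cont (hu_cd 0) 0).pow 2))
      (intT2 ((continuous_const.mul ((pd_cont (hu_cd 0) 0).mul (pd_cont (hu_cd 1) 1))).add
        ((pd_cont (hu_cd 1) 1).pow 2)))]
    rw [integral_add (f := fun x => 2 * (pd 0 (pd 0 f) x * pd 1 (pd 1 f) x))
      (g := fun x => (pd 1 (pd 1 f) x)^2) (intT2 (continuous_const.mul ((pd_cont (hu_cd 0) 0).mul
      (pd_cont (hu_cd 1) 1)))) (intT2 ((pd_cont (hu_cd 1) 1).pow 2))]
  have hcross : 0 ≤ ∫ x in T2, 2 * (pd 0 (pd 0 f) x * pd 1 (pd 1 f) x) := by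
    rw [integral_const_mul]
    have := cross_nonneg f hf hp
    linarith
  -- split the quartic integral
  have hsplit : ∫ x in T2, (pd 0 f x)^4 + (pd 1 f x)^4
      = (∫ x in T2, (pd 0 f x)^4) + ∫ x in T2, (pd 1 f x)^4 :=
    integral_add (intT2 ((pd_cont hf 0).pow 4)) (intT2 ((pd_cont hf 1).pow 4))
  have k0 := key_est f hf hp M hM 0
  have k1 := key_est f hf hp M hM 1
  have hchain : ∫ x in T2, (pd 0 f x)^4 + (pd 1 f x)^4
      ≤ 9 * M^2 * ∫ x in T2, (pd 0 (pd 0 f) x + pd 1 (pd 1 f) x)^2 := by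
    rw [hsplit, hexp]
    nlinarith [sq_nonneg M]
  have hC0 : 0 ≤ ∫ x in T2, (pd 0 (pd 0 f) x + pd 1 (pd 1 f) x)^2 :=
    setIntegral_nonneg measurableSet_T2 fun x _ => sq_nonneg _
  calc Real.sqrt (∫ x in T2, (pd 0 f x)^4 + (pd 1 f x)^4)
      ≤ Real.sqrt (9 * M^2 * ∫ x in T2, (pd 0 (pd 0 f) x + pd 1 (pd 1 f) x)^2) :=
        Real.sqrt_le_sqrt hchain
    _ = 3 * M * Real.sqrt (∫ x in T2, (pd 0 (pd 0 f) x + pd 1 (pd 1 f) x)^2) := by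
        rw [show 9 * M^2 * (∫ x in T2, (pd 0 (pd 0 f) x + pd 1 (pd 1 f) x)^2)
          = (3*M)^2 * ∫ x in T2, (pd 0 (pd 0 f) x + pd 1 (pd 1 f) x)^2 by ring]
        rw [Real.sqrt_mul (sq_nonneg _), Real.sqrt_sq (by positivity)]
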